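/- (Proposition 1, conditional covariance case.) Let H_X and H_Y be real Hilbert spaces, w_1, …, w_n ∈ H_X with Gram matrix k (k_{ij} = ⟨w_i, w_j⟩), u_1, …, u_n ∈ H_Y with Gram matrix L (L_{ij} = ⟨u_i, u_j⟩), ε > 0, and λ > 0. Let D := Ĉ_YY − Ĉ_YX ∘ (Ĉ_XX + ε·Id)^{-1} ∘ Ĉ_XY be the regularized empirical conditional covariance operator on H_Y, and set T := L − (k + nε·I_n)^{-1} k L. Assume the matrix k ⊗ T + nλ I_{n²} is invertible. If h_1, …, h_n ∈ H_Y satisfy Σ_{j=1}^n k_{ij} D h_j + λ h_i = u_i for all i = 1, …, n, then for every a ∈ ℝ^n and every v ∈ H_Y, ⟨Σ_{i=1}^n a_i D h_i, v⟩ = bᵀ (aᵀ ⊗ T)(k ⊗ T + nλ I_{n²})^{-1} vec(I_n), where b ∈ ℝ^n has entries b_i = ⟨u_i, v⟩ and aᵀ ⊗ T denotes the n × n² Kronecker product of the row vector aᵀ with T. -/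

import Mathlib

/-!
Put `P = (k + nε)⁻¹ k`. Pairing `Ĉ_XX (R φ) + ε R φ = φ` with the `w_i` shows that the numbers
`⟪w_p, R (Ĉ_XY φ)⟫` are the entries of `P` applied to the coefficients `⟪u_q, φ⟫`, so `D` acts
on the span of the `u_p` through the matrix `C = (1 - P) / n`, and `T = n C L`. Pairing the
equation for `h` with the `u_q` and multiplying by `C` shows that `G = C (⟪u_q, h_i⟫)_{q,i}`
solves the Sylvester equation `T G kᵀ + nλ G = T`, whose vectorization reads
`(k ⊗ T + nλ) vec G = vec T`. With `vec F = (k ⊗ T + nλ)⁻¹ vec Iₙ`, the matrix `T F` solves it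
too, so `G = T F`; both sides of the claim are then `bᵀ G a`.
-/

open scoped RealInnerProductSpace BigOperators Kronecker
open Matrix

/-- `vecStack A` is the vectorization of the matrix `A` obtained by stacking its
columns: the entry of `vecStack A` at index `(j, i)` (column `j`, row `i`) is `A i j`. -/
def vecStack {m p : Type*} {α : Type*} (A : Matrix p m α) : m × p → α :=
  fun x => A x.2 x.1

theorem vecStack_eq_vec {m p α : Type*} (A : Matrix p m α) : vecStack A = vec A := rfl

theorem of_mul_mulVec_vec {l m p R : Type*} [Fintype m] [Fintype p] [CommSemiring R]
    (a : m → R) (T : Matrix l p R) (X : Matrix p m R) :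
    (of fun (i : l) (jq : m × p) => a jq.1 * T i jq.2) *ᵥ vec X = (T * X) *ᵥ a := by
  ext i
  simp only [mulVec, dotProduct, Fintype.sum_prod_type, of_apply, vec, mul_apply, Finset.sum_mul]
  exact Finset.sum_congr rfl fun j _ => Finset.sum_congr rfl fun q _ => by ring

section Sylvester

variable {m p R : Type*} [Fintype m] [Fintype p] [DecidableEq m] [DecidableEq p] [CommRing R]

theorem kronecker_add_smul_one_mulVec_vec (A : Matrix m m R) (B : Matrix p p R) (c : R)
    (X : Matrix p m R) :
    (A ⊗ₖ B + c • 1) *ᵥ vec X = vec (B * X * Aᵀ + c • X) := by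
  rw [add_mulVec, kronecker_mulVec_vec, smul_mulVec, one_mulVec, vec_add, vec_smul]

theorem vec_eq_inv_mulVec_iff {A : Matrix m m R} {B : Matrix p p R} {c : R}
    (hQ : IsUnit (A ⊗ₖ B + c • 1)) {X Y : Matrix p m R} :
    vec X = (A ⊗ₖ B + c • 1)⁻¹ *ᵥ vec Y ↔ B * X * Aᵀ + c • X = Y := by
  have hdet := (isUnit_iff_isUnit_det _).mp hQ
  rw [← vec_inj, ← kronecker_add_smul_one_mulVec_vec]
  constructor
  · intro hX
    rw [hX, mulVec_mulVec, mul_nonsing_inv _ hdet, one_mulVec]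
  · intro hX
    rw [← hX, mulVec_mulVec, nonsing_inv_mul _ hdet, one_mulVec]

end Sylvester

def crossGram {ι κ E : Type*} [Inner ℝ E] (u : ι → E) (h : κ → E) : Matrix ι κ ℝ :=
  of fun q i => ⟪u q, h i⟫

section Gram

variable {ι E F : Type*} [Fintype ι] [NormedAddCommGroup E] [InnerProductSpace ℝ E]
  [NormedAddCommGroup F] [InnerProductSpace ℝ F]

theorem inner_sum_smul_eq_gram_mulVec (v : ι → E) (c : ι → ℝ) (i : ι) :
    ⟪v i, ∑ j, c j • v j⟫ = (gram ℝ v *ᵥ c) i := by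
  simp only [inner_sum, real_inner_smul_right, mulVec, dotProduct, gram_apply, mul_comm]

theorem sum_smul_inner_eq_dotProduct (v : ι → E) (c : ι → ℝ) (x : E) :
    ⟪∑ j, c j • v j, x⟫ = (fun j => ⟪v j, x⟫) ⬝ᵥ c := by
  simp only [sum_inner, real_inner_smul_left, dotProduct, mul_comm]

theorem sum_smul_sum_smul_eq_sum_mulVec_smul (v : ι → E) (G : Matrix ι ι ℝ) (a : ι → ℝ) :
    ∑ i, a i • ∑ p, G p i • v p = ∑ p, (G *ᵥ a) p • v p := by
  simp only [Finset.smul_sum, smul_smul, mulVec, dotProduct, Finset.sum_smul]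
  rw [Finset.sum_comm]
  simp only [mul_comm]

theorem posDef_gram_add_smul_one [DecidableEq ι] (v : ι → E) {c : ℝ} (hc : 0 < c) :
    (gram ℝ v + c • 1).PosDef :=
  PosDef.posSemidef_add (posSemidef_gram ℝ v) (PosDef.one.smul hc)

theorem inner_eq_of_cov_add_smul_eq [DecidableEq ι] (w : ι → E) {s ε : ℝ} (hs : 0 < s)
    (hε : 0 < ε) {x : E} {c : ι → ℝ}
    (hx : (1 / s) • ∑ p, ⟪w p, x⟫ • w p + ε • x = (1 / s) • ∑ q, c q • w q) :
    (fun p => ⟪w p, x⟫) = ((gram ℝ w + (s * ε) • 1)⁻¹ * gram ℝ w) *ᵥ c := by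
  have hdet : IsUnit (gram ℝ w + (s * ε) • 1).det :=
    (posDef_gram_add_smul_one w (mul_pos hs hε)).isUnit.map detMonoidHom
  have key : (gram ℝ w + (s * ε) • 1) *ᵥ (fun p => ⟪w p, x⟫) = gram ℝ w *ᵥ c := by
    ext i
    have hi := congrArg (⟪w i, ·⟫) hx
    simp only [inner_add_right, real_inner_smul_right, inner_sum_smul_eq_gram_mulVec] at hi
    simp only [add_mulVec, smul_mulVec, one_mulVec, Pi.add_apply, Pi.smul_apply, smul_eq_mul]
    field_simp at hi
    linarith
  rw [← mulVec_mulVec, ← key, mulVec_mulVec, nonsing_inv_mul _ hdet, one_mulVec]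

theorem condCov_eq_sum_mulVec_smul [DecidableEq ι] (w : ι → E) (u : ι → F) {s ε : ℝ}
    (hs : 0 < s) (hε : 0 < ε) {R : E → E}
    (hR : ∀ φ, (1 / s) • ∑ p, ⟪w p, R φ⟫ • w p + ε • R φ = φ) {D : F → F}
    (hD : ∀ φ, D φ = (1 / s) • ∑ p, ⟪u p, φ⟫ • u p
      - (1 / s) • ∑ p, ⟪w p, R ((1 / s) • ∑ q, ⟪u q, φ⟫ • w q)⟫ • u p) (φ : F) :
    D φ = ∑ p, (((1 / s) • (1 - (gram ℝ w + (s * ε) • 1)⁻¹ * gram ℝ w)) *ᵥ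
      fun q => ⟪u q, φ⟫) p • u p := by
  have hRw := congrFun (inner_eq_of_cov_add_smul_eq w hs hε (hR ((1 / s) • ∑ q, ⟪u q, φ⟫ • w q)))
  rw [hD]
  simp_rw [hRw]
  simp only [smul_mulVec, sub_mulVec, one_mulVec, Pi.smul_apply, Pi.sub_apply, smul_eq_mul,
    mul_sub, sub_smul, Finset.sum_sub_distrib, Finset.smul_sum, smul_smul]

theorem gram_mul_mul_crossGram_mul_add_smul_eq {u : ι → F} {C : Matrix ι ι ℝ} {D : F → F}
    (hD : ∀ φ, D φ = ∑ p, (C *ᵥ fun q => ⟪u q, φ⟫) p • u p) (k : Matrix ι ι ℝ) (lam : ℝ)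
    {h : ι → F} (hh : ∀ i, ∑ j, k i j • D (h j) + lam • h i = u i) :
    gram ℝ u * C * crossGram u h * kᵀ + lam • crossGram u h = gram ℝ u := by
  ext q i
  have hDh : ∀ j, ⟪u q, D (h j)⟫ = (gram ℝ u * C * crossGram u h) q j := fun j => by
    rw [hD, inner_sum_smul_eq_gram_mulVec, mulVec_mulVec]
    rfl
  have hqi := congrArg (⟪u q, ·⟫) (hh i)
  simp only [inner_add_right, inner_sum, real_inner_smul_right, hDh] at hqi
  simpa [mul_apply, crossGram, gram_apply, mul_comm] using hqi

theorem inner_sum_smul_eq_dotProduct_mulVec {u : ι → F} {C : Matrix ι ι ℝ} {D : F → F}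
    (hD : ∀ φ, D φ = ∑ p, (C *ᵥ fun q => ⟪u q, φ⟫) p • u p) (h : ι → F) (a : ι → ℝ) (v : F) :
    ⟪∑ i, a i • D (h i), v⟫ = (fun p => ⟪u p, v⟫) ⬝ᵥ ((C * crossGram u h) *ᵥ a) := by
  have hDh : ∀ i, D (h i) = ∑ p, (C * crossGram u h) p i • u p := fun i => by
    rw [hD]; rfl
  simp only [hDh, sum_smul_sum_smul_eq_sum_mulVec_smul, sum_smul_inner_eq_dotProduct]

end Gram

theorem proposition1_conditional_covariance_case_general
    {HX HY : Type*} [NormedAddCommGroup HX] [InnerProductSpace ℝ HX]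
    [NormedAddCommGroup HY] [InnerProductSpace ℝ HY]
    (n : ℕ) (hn : 0 < n) (w : Fin n → HX) (u : Fin n → HY)
    (k : Matrix (Fin n) (Fin n) ℝ) (hk : ∀ i j, k i j = ⟪w i, w j⟫)
    (L : Matrix (Fin n) (Fin n) ℝ) (hL : ∀ i j, L i j = ⟪u i, u j⟫)
    (ε : ℝ) (hε : 0 < ε) (lam : ℝ)
    -- `R` is the inverse of the regularized covariance operator `Ĉ_XX + ε Id`:
    (R : HX → HX)
    (hR1 : ∀ φ : HX, ((1 / (n : ℝ)) • ∑ p, ⟪w p, R φ⟫ • w p) + ε • R φ = φ)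
    -- `D = Ĉ_YY − Ĉ_YX ∘ R ∘ Ĉ_XY`:
    (D : HY → HY)
    (hD : ∀ φ : HY,
      D φ = (1 / (n : ℝ)) • ∑ p, ⟪u p, φ⟫ • u p
        - (1 / (n : ℝ)) •
            ∑ p, ⟪w p, R ((1 / (n : ℝ)) • ∑ q, ⟪u q, φ⟫ • w q)⟫ • u p)
    -- `T = L − (k + nε Iₙ)⁻¹ k L`:
    (T : Matrix (Fin n) (Fin n) ℝ)
    (hT : T = L - (k + ((n : ℝ) * ε) • 1)⁻¹ * k * L)
    (hinv : IsUnit (k ⊗ₖ T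
      + ((n : ℝ) * lam) • (1 : Matrix (Fin n × Fin n) (Fin n × Fin n) ℝ))) :
    ∀ h : Fin n → HY,
      (∀ i, (∑ j, k i j • D (h j)) + lam • h i = u i) →
      ∀ (a : Fin n → ℝ) (v : HY),
        ⟪∑ i, a i • D (h i), v⟫
          = (fun i => ⟪u i, v⟫) ⬝ᵥ
              (Matrix.of fun (p : Fin n) (jq : Fin n × Fin n) => a jq.1 * T p jq.2).mulVec
                ((k ⊗ₖ T + ((n : ℝ) * lam) • 1)⁻¹.mulVec
                  (vecStack (1 : Matrix (Fin n) (Fin n) ℝ))) := by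
  intro h hh a v
  obtain rfl : k = gram ℝ w := Matrix.ext hk
  obtain rfl : L = gram ℝ u := Matrix.ext hL
  have hn' : (0 : ℝ) < n := Nat.cast_pos.mpr hn
  set C := (1 / (n : ℝ)) • (1 - (gram ℝ w + ((n : ℝ) * ε) • 1)⁻¹ * gram ℝ w)
  have hDC : ∀ φ, D φ = ∑ p, (C *ᵥ fun q => ⟪u q, φ⟫) p • u p :=
    condCov_eq_sum_mulVec_smul w u hn' hε hR1 hD
  have hTC : T = (n : ℝ) • (C * gram ℝ u) := by
    rw [hT, smul_mul, smul_smul, mul_one_div_cancel hn'.ne', one_smul, sub_mul, one_mul,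
      Matrix.mul_assoc]
  have hG :
      T * (C * crossGram u h) * (gram ℝ w)ᵀ + ((n : ℝ) * lam) • (C * crossGram u h) = T := by
    have := congrArg ((n : ℝ) • C * ·)
      (gram_mul_mul_crossGram_mul_add_smul_eq hDC (gram ℝ w) lam hh)
    simpa only [hTC, Matrix.mul_add, Matrix.mul_smul, Matrix.smul_mul, smul_smul,
      Matrix.mul_assoc, mul_comm lam] using this
  obtain ⟨F, hF⟩ := vec_bijective.2 ((gram ℝ w ⊗ₖ T + ((n : ℝ) * lam) • 1)⁻¹ *ᵥ vec 1)
  have hTF : T * (T * F) * (gram ℝ w)ᵀ + ((n : ℝ) * lam) • (T * F) = T := by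
    rw [Matrix.mul_assoc T, Matrix.mul_assoc T, ← Matrix.mul_smul, ← Matrix.mul_add,
      ← Matrix.mul_assoc, (vec_eq_inv_mulVec_iff hinv).1 hF, Matrix.mul_one]
  have hGF : C * crossGram u h = T * F := vec_inj.1 <|
    ((vec_eq_inv_mulVec_iff hinv).2 hG).trans ((vec_eq_inv_mulVec_iff hinv).2 hTF).symm
  rw [inner_sum_smul_eq_dotProduct_mulVec hDC, hGF, vecStack_eq_vec, ← hF, of_mul_mulVec_vec]

/-- Proposition 1, conditional covariance case: with
`D = Ĉ_YY − Ĉ_YX ∘ (Ĉ_XX + ε Id)⁻¹ ∘ Ĉ_XY` the regularized empirical conditional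
covariance operator, `T = L − (k + nε Iₙ)⁻¹ k L`, and `k ⊗ T + nλ I_{n²}` assumed
invertible, any solution `h` of `Σⱼ kᵢⱼ D hⱼ + λ hᵢ = uᵢ` satisfies
`⟪Σᵢ aᵢ D hᵢ, v⟫ = bᵀ (aᵀ ⊗ T)(k ⊗ T + nλ I_{n²})⁻¹ vec(Iₙ)` with `bᵢ = ⟪uᵢ, v⟫`. -/
theorem proposition1_conditional_covariance_case
    {HX HY : Type*} [NormedAddCommGroup HX] [InnerProductSpace ℝ HX]
    [NormedAddCommGroup HY] [InnerProductSpace ℝ HY]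
    (n : ℕ) (hn : 0 < n) (w : Fin n → HX) (u : Fin n → HY)
    (k : Matrix (Fin n) (Fin n) ℝ) (hk : ∀ i j, k i j = ⟪w i, w j⟫)
    (L : Matrix (Fin n) (Fin n) ℝ) (hL : ∀ i j, L i j = ⟪u i, u j⟫)
    (ε : ℝ) (hε : 0 < ε) (lam : ℝ) (hlam : 0 < lam)
    -- `R` is the inverse of the regularized covariance operator `Ĉ_XX + ε Id`:
    (R : HX → HX)
    (hR1 : ∀ φ : HX, ((1 / (n : ℝ)) • ∑ p, ⟪w p, R φ⟫ • w p) + ε • R φ = φ)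
    (hR2 : ∀ φ : HX, R (((1 / (n : ℝ)) • ∑ p, ⟪w p, φ⟫ • w p) + ε • φ) = φ)
    -- `D = Ĉ_YY − Ĉ_YX ∘ R ∘ Ĉ_XY`:
    (D : HY → HY)
    (hD : ∀ φ : HY,
      D φ = (1 / (n : ℝ)) • ∑ p, ⟪u p, φ⟫ • u p
        - (1 / (n : ℝ)) •
            ∑ p, ⟪w p, R ((1 / (n : ℝ)) • ∑ q, ⟪u q, φ⟫ • w q)⟫ • u p)
    -- `T = L − (k + nε Iₙ)⁻¹ k L`:
    (T : Matrix (Fin n) (Fin n) ℝ)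
    (hT : T = L - (k + ((n : ℝ) * ε) • 1)⁻¹ * k * L)
    (hinv : IsUnit (k ⊗ₖ T
      + ((n : ℝ) * lam) • (1 : Matrix (Fin n × Fin n) (Fin n × Fin n) ℝ))) :
    ∀ h : Fin n → HY,
      (∀ i, (∑ j, k i j • D (h j)) + lam • h i = u i) →
      ∀ (a : Fin n → ℝ) (v : HY),
        ⟪∑ i, a i • D (h i), v⟫
          = (fun i => ⟪u i, v⟫) ⬝ᵥ
              (Matrix.of fun (p : Fin n) (jq : Fin n × Fin n) => a jq.1 * T p jq.2).mulVec
                ((k ⊗ₖ T + ((n : ℝ) * lam) • 1)⁻¹.mulVec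
                  (vecStack (1 : Matrix (Fin n) (Fin n) ℝ))) :=
  proposition1_conditional_covariance_case_general n hn w u k hk L hL ε hε lam R hR1 D hD T hT hinv
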